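/- arXiv:1311.3804 — 2 statements merged into one kernel-verified Lean document; each statement's English description precedes it below -/
import Mathlib

section
/- Let G and H be finite connected simple graphs, x ∈ V(G) and y ∈ V(H). Then the (x,y)-geodomination number of the Cartesian product satisfies g_{(x,y)}(G □ H) = g_x(G) · g_y(H). -/
/-!
Distances in `G □ H` add up coordinatewise, so a vertex `(s, t)` lies on an `(x, y)`–`(w, z)`
geodesic exactly when `s` lies on an `x`–`w` geodesic and `t` on a `y`–`z` geodesic. Call `v`
`x`-maximal if no `x`-geodesic through `v` continues past `v`. In a finite connected graph every
vertex lies on an `x`-geodesic ending in an `x`-maximal vertex (extend it as far as possible),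
and every `x`-geodominating set contains all `x`-maximal vertices, so `g_x` counts them. The
`(x, y)`-maximal vertices of `G □ H` are the pairs of an `x`-maximal and a `y`-maximal vertex.
-/

open SimpleGraph

/-- `S` is an `x`-geodominating set: every vertex lies on an `x`–`y` geodesic
for some `y ∈ S`. -/
def IsGeodominatingSet {V : Type*} (G : SimpleGraph V) (x : V) (S : Set V) : Prop :=
  ∀ u : V, ∃ y ∈ S, G.dist x u + G.dist u y = G.dist x y

/-- The `x`-geodomination number: the minimum cardinality of an `x`-geodominating set. -/
noncomputable def geodominationNumber {V : Type*} (G : SimpleGraph V) (x : V) : ℕ :=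
  sInf {n : ℕ | ∃ S : Set V, IsGeodominatingSet G x S ∧ S.ncard = n}

namespace SimpleGraph

variable {V W : Type*} {G : SimpleGraph V} {H : SimpleGraph W}

lemma Connected.dist_boxProd (hG : G.Connected) (hH : H.Connected) (p q : V × W) :
    (G □ H).dist p q = G.dist p.1 q.1 + H.dist p.2 q.2 := by
  apply Nat.cast_injective (R := ℕ∞)
  rw [((hG.boxProd hH).preconnected p q).coe_dist_eq_edist, edist_boxProd, Nat.cast_add,
    (hG.preconnected p.1 q.1).coe_dist_eq_edist, (hH.preconnected p.2 q.2).coe_dist_eq_edist]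

lemma Connected.dist_add_dist_boxProd_eq_iff (hG : G.Connected) (hH : H.Connected)
    (p q r : V × W) :
    (G □ H).dist p q + (G □ H).dist q r = (G □ H).dist p r ↔
      G.dist p.1 q.1 + G.dist q.1 r.1 = G.dist p.1 r.1 ∧
        H.dist p.2 q.2 + H.dist q.2 r.2 = H.dist p.2 r.2 := by
  have hG_tri := hG.dist_triangle (u := p.1) (v := q.1) (w := r.1)
  have hH_tri := hH.dist_triangle (u := p.2) (v := q.2) (w := r.2)
  simp only [hG.dist_boxProd hH]
  omega

def maximalVertices (G : SimpleGraph V) (x : V) : Set V :=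
  {v | ∀ w, G.dist x v + G.dist v w = G.dist x w → w = v}

lemma isGeodominatingSet_maximalVertices [Finite V] (hG : G.Connected) (x : V) :
    IsGeodominatingSet G x (G.maximalVertices x) := by
  intro u
  obtain ⟨s, hs, hs_max⟩ := Set.exists_max_image
    {s | G.dist x u + G.dist u s = G.dist x s} (G.dist x) (Set.toFinite _)
    ⟨u, by simp⟩
  refine ⟨s, fun w hw => ?_, hs⟩
  have hw_through_u : G.dist x u + G.dist u w = G.dist x w := by
    have hxuw := hG.dist_triangle (u := x) (v := u) (w := w)
    have husw := hG.dist_triangle (u := u) (v := s) (w := w)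
    simp only [Set.mem_ofPred_eq] at hs
    omega
  have hw_le := hs_max w hw_through_u
  exact (hG.dist_eq_zero_iff.mp (by omega)).symm

lemma IsGeodominatingSet.maximalVertices_subset {x : V} {S : Set V}
    (hS : IsGeodominatingSet G x S) : G.maximalVertices x ⊆ S := by
  intro v hv
  obtain ⟨s, hsS, hs⟩ := hS v
  rwa [hv s hs] at hsS

lemma geodominationNumber_eq_ncard_maximalVertices [Finite V] (hG : G.Connected) (x : V) :
    geodominationNumber G x = (G.maximalVertices x).ncard := by
  apply le_antisymm
  · exact Nat.sInf_le ⟨_, isGeodominatingSet_maximalVertices hG x, rfl⟩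
  · refine le_csInf ⟨_, _, isGeodominatingSet_maximalVertices hG x, rfl⟩ ?_
    rintro n ⟨S, hS, rfl⟩
    exact Set.ncard_le_ncard hS.maximalVertices_subset

lemma Connected.maximalVertices_boxProd (hG : G.Connected) (hH : H.Connected) (x : V) (y : W) :
    (G □ H).maximalVertices (x, y) = G.maximalVertices x ×ˢ H.maximalVertices y := by
  ext ⟨s, t⟩
  simp only [maximalVertices, Set.mem_prod, Set.mem_ofPred_eq, Prod.forall,
    hG.dist_add_dist_boxProd_eq_iff hH, Prod.mk.injEq]
  constructor
  · intro h
    exact ⟨fun w hw => (h w t ⟨hw, by simp⟩).1, fun z hz => (h s z ⟨by simp, hz⟩).2⟩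
  · rintro ⟨hs, ht⟩ w z ⟨hw, hz⟩
    exact ⟨hs w hw, ht z hz⟩

end SimpleGraph

theorem geodominationNumber_boxProd {V W : Type*} [Fintype V] [Fintype W]
    (G : SimpleGraph V) (H : SimpleGraph W) (hG : G.Connected) (hH : H.Connected)
    (x : V) (y : W) :
    geodominationNumber (G □ H) (x, y) = geodominationNumber G x * geodominationNumber H y := by
  rw [geodominationNumber_eq_ncard_maximalVertices (hG.boxProd hH),
    geodominationNumber_eq_ncard_maximalVertices hG,
    geodominationNumber_eq_ncard_maximalVertices hH,
    hG.maximalVertices_boxProd hH, Set.ncard_prod]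
end

section
/- Let G be a finite connected simple graph, let v be a simplicial vertex of G, and let x be any vertex of G with x ≠ v. Then v belongs to the boundary ∂(x) of x; consequently v belongs to the unique minimum x-geodominating set of G. -/
open SimpleGraph

/-- The boundary of a vertex `x`: vertices `v` all of whose neighbors are
no further from `x` than `v` itself. -/
def boundary {V : Type*} (G : SimpleGraph V) (x : V) : Set V :=
  {v | ∀ w, G.Adj v w → G.dist x w ≤ G.dist x v}

/-! A simplicial vertex `v ≠ x` has a neighbor `u` one step closer to `x`; every other neighbor
of `v` is adjacent to `u`, so no neighbor is further from `x` than `v`. A boundary vertex `v`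
lies on no `x`–`y` geodesic with `y ≠ v`: the neighbor of `v` towards `y` would give a shortcut
from `x` to `y`. Hence every `x`-geodominating set contains `v`. -/

namespace SimpleGraph

variable {V : Type*} {G : SimpleGraph V}

theorem Reachable.exists_adj_dist_add_one_eq {u v : V} (h : G.Reachable u v) (hne : u ≠ v) :
    ∃ w, G.Adj u w ∧ G.dist w v + 1 = G.dist u v := by
  obtain ⟨p, hp⟩ := h.exists_walk_length_eq_dist
  cases p with
  | nil => exact absurd rfl hne
  | @cons _ w _ hadj q =>
    refine ⟨w, hadj, le_antisymm ?_ ?_⟩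
    · simpa [← hp] using dist_le q
    · have : G.dist u v ≤ G.dist u w + G.dist w v := hadj.reachable.dist_triangle_left v
      rw [dist_eq_one_iff_adj.mpr hadj] at this
      omega

theorem Connected.mem_boundary_of_isClique_neighborSet (hG : G.Connected) {v x : V}
    (hv : G.IsClique (G.neighborSet v)) (hxv : x ≠ v) : v ∈ boundary G x := by
  intro w hvw
  obtain ⟨u, hvu, hu⟩ := (hG v x).exists_adj_dist_add_one_eq hxv.symm
  rw [dist_comm (u := x) (v := v), ← hu, dist_comm (u := u)]
  obtain rfl | hwu := eq_or_ne w u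
  · omega
  · calc G.dist x w ≤ G.dist x u + G.dist u w := hG.dist_triangle
      _ = G.dist x u + 1 := by rw [dist_eq_one_iff_adj.mpr (hv hvu hvw hwu.symm)]

theorem Connected.eq_of_mem_boundary_of_dist_add_dist_eq (hG : G.Connected) {x v y : V}
    (hv : v ∈ boundary G x) (hgeo : G.dist x v + G.dist v y = G.dist x y) : y = v := by
  by_contra hyv
  obtain ⟨w, hvw, hw⟩ := (hG v y).exists_adj_dist_add_one_eq (Ne.symm hyv)
  have : G.dist x y ≤ G.dist x w + G.dist w y := hG.dist_triangle
  have := hv w hvw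
  omega

theorem Connected.mem_of_isGeodominatingSet_of_mem_boundary (hG : G.Connected) {x v : V}
    {S : Set V} (hS : IsGeodominatingSet G x S) (hv : v ∈ boundary G x) : v ∈ S := by
  obtain ⟨y, hyS, hgeo⟩ := hS v
  rwa [← hG.eq_of_mem_boundary_of_dist_add_dist_eq hv hgeo]

end SimpleGraph

theorem simplicial_mem_boundary_general {V : Type*} (G : SimpleGraph V)
    (hG : G.Connected) (v : V)
    (hv : ∀ a b : V, G.Adj v a → G.Adj v b → a ≠ b → G.Adj a b)
    (x : V) (hxv : x ≠ v) :
    v ∈ boundary G x ∧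
      ∀ S : Set V, IsGeodominatingSet G x S →
        (∀ T : Set V, IsGeodominatingSet G x T → S.ncard ≤ T.ncard) → v ∈ S := by
  have hbd : v ∈ boundary G x :=
    hG.mem_boundary_of_isClique_neighborSet (fun a ha b hb hab ↦ hv a b ha hb hab) hxv
  exact ⟨hbd, fun S hS _ ↦ hG.mem_of_isGeodominatingSet_of_mem_boundary hS hbd⟩

theorem simplicial_mem_boundary {V : Type*} [Fintype V] (G : SimpleGraph V)
    (hG : G.Connected) (v : V)
    (hv : ∀ a b : V, G.Adj v a → G.Adj v b → a ≠ b → G.Adj a b)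
    (x : V) (hxv : x ≠ v) :
    v ∈ boundary G x ∧
      ∀ S : Set V, IsGeodominatingSet G x S →
        (∀ T : Set V, IsGeodominatingSet G x T → S.ncard ≤ T.ncard) → v ∈ S :=
  simplicial_mem_boundary_general G hG v hv x hxv
end
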